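/- arXiv:1608.00698 — 5 statements merged into one kernel-verified Lean document; each statement's English description precedes it below -/
import Mathlib

section
/- Fix an integer n ≥ 1 and reals σ_w² > 0, ζ > 0, σ_a² > 0. For z ≥ 0 define D(z) = ∫₀^ζ (σ_w²+θ)^{-n} exp(−z/(σ_w²+θ)) dθ and N(z) = ∫_{σ_a²}^{σ_a²+ζ} (σ_w²+θ)^{-n} exp(−z/(σ_w²+θ)) dθ. Then the ratio Λ(z) = N(z)/D(z) is nondecreasing on [0,∞): for all 0 ≤ x ≤ y, N(x)·D(y) ≤ N(y)·D(x). -/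
/-!
Write `k z θ = (σ_w² + θ)⁻ⁿ exp (-z / (σ_w² + θ))`. For `x ≤ y` the ratio
`k y θ / k x θ = exp (-(y - x) / (σ_w² + θ))` is nondecreasing in `θ`, so `k y` puts relatively
more weight than `k x` on larger `θ`. The interval of `N` lies to the right of that of `D`, which
makes `N / D` larger at `y` than at `x`. For two intervals that touch at most at a point this is
seen by comparing the ratio with its value at the common boundary point; overlapping intervals
are split at their endpoints into pieces of that kind.
-/

open MeasureTheory intervalIntegral Set

section MonotoneRatio

variable {f r : ℝ → ℝ}

theorem ContinuousOn.intervalIntegrable_of_Icc_subset {a b c d : ℝ}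
    (hf : ContinuousOn f (Icc a d)) (hab : a ≤ b) (hbc : b ≤ c) (hcd : c ≤ d) : IntervalIntegrable f volume b c :=
  (hf.mono (by rw [uIcc_of_le hbc]; exact Icc_subset_Icc hab hcd)).intervalIntegrable

theorem integral_mul_integral_mul_le_of_monotoneOn_of_le {a b c d : ℝ}
    (hab : a ≤ b) (hbc : b ≤ c) (hcd : c ≤ d) (hf : ContinuousOn f (Icc a d))
    (hr : ContinuousOn r (Icc a d)) (hf0 : ∀ θ ∈ Icc a d, 0 ≤ f θ)
    (hr_mono : MonotoneOn r (Icc a d)) :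
    (∫ θ in c..d, f θ) * (∫ θ in a..b, r θ * f θ) ≤
      (∫ θ in c..d, r θ * f θ) * ∫ θ in a..b, f θ := by
  have hrf : ContinuousOn (fun θ => r θ * f θ) (Icc a d) := hr.mul hf
  have hbd : b ∈ Icc a d := ⟨hab, hbc.trans hcd⟩
  -- `r ≤ r b` on `[a, b]` and `r b ≤ r` on `[c, d]`
  have left : ∫ θ in a..b, r θ * f θ ≤ r b * ∫ θ in a..b, f θ := by
    rw [← intervalIntegral.integral_const_mul]
    refine integral_mono_on hab (hrf.intervalIntegrable_of_Icc_subset le_rfl hab (hbc.trans hcd))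
      ((hf.intervalIntegrable_of_Icc_subset le_rfl hab (hbc.trans hcd)).const_mul _)
      fun θ hθ => ?_
    have hθ' : θ ∈ Icc a d := ⟨hθ.1, hθ.2.trans (hbc.trans hcd)⟩
    exact mul_le_mul_of_nonneg_right (hr_mono hθ' hbd hθ.2) (hf0 θ hθ')
  have right : r b * ∫ θ in c..d, f θ ≤ ∫ θ in c..d, r θ * f θ := by
    rw [← intervalIntegral.integral_const_mul]
    refine integral_mono_on hcd ((hf.intervalIntegrable_of_Icc_subset (hab.trans hbc) hcd
      le_rfl).const_mul _) (hrf.intervalIntegrable_of_Icc_subset (hab.trans hbc) hcd le_rfl)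
      fun θ hθ => ?_
    have hθ' : θ ∈ Icc a d := ⟨(hab.trans hbc).trans hθ.1, hθ.2⟩
    exact mul_le_mul_of_nonneg_right (hr_mono hbd hθ' (hbc.trans hθ.1)) (hf0 θ hθ')
  have hF_ab : 0 ≤ ∫ θ in a..b, f θ :=
    integral_nonneg hab fun θ hθ => hf0 θ ⟨hθ.1, hθ.2.trans (hbc.trans hcd)⟩
  have hF_cd : 0 ≤ ∫ θ in c..d, f θ :=
    integral_nonneg hcd fun θ hθ => hf0 θ ⟨(hab.trans hbc).trans hθ.1, hθ.2⟩
  calc (∫ θ in c..d, f θ) * (∫ θ in a..b, r θ * f θ)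
      ≤ (∫ θ in c..d, f θ) * (r b * ∫ θ in a..b, f θ) := mul_le_mul_of_nonneg_left left hF_cd
    _ = (r b * ∫ θ in c..d, f θ) * ∫ θ in a..b, f θ := by ring
    _ ≤ (∫ θ in c..d, r θ * f θ) * ∫ θ in a..b, f θ := mul_le_mul_of_nonneg_right right hF_ab

theorem integral_mul_integral_mul_le_of_monotoneOn {a b c d : ℝ}
    (hab : a ≤ b) (hcd : c ≤ d) (hac : a ≤ c) (hbd : b ≤ d) (hf : ContinuousOn f (Icc a d))
    (hr : ContinuousOn r (Icc a d)) (hf0 : ∀ θ ∈ Icc a d, 0 ≤ f θ)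
    (hr_mono : MonotoneOn r (Icc a d)) :
    (∫ θ in c..d, f θ) * (∫ θ in a..b, r θ * f θ) ≤
      (∫ θ in c..d, r θ * f θ) * ∫ θ in a..b, f θ := by
  rcases le_total b c with hbc | hcb
  · exact integral_mul_integral_mul_le_of_monotoneOn_of_le hab hbc hcd hf hr hf0 hr_mono
  have hrf : ContinuousOn (fun θ => r θ * f θ) (Icc a d) := hr.mul hf
  have split_ab : ∀ g : ℝ → ℝ, ContinuousOn g (Icc a d) →
      ∫ θ in a..b, g θ = (∫ θ in a..c, g θ) + ∫ θ in c..b, g θ := fun g hg =>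
    (integral_add_adjacent_intervals (hg.intervalIntegrable_of_Icc_subset le_rfl hac
      (hcb.trans hbd)) (hg.intervalIntegrable_of_Icc_subset hac hcb hbd)).symm
  have split_cd : ∀ g : ℝ → ℝ, ContinuousOn g (Icc a d) →
      ∫ θ in c..d, g θ = (∫ θ in c..b, g θ) + ∫ θ in b..d, g θ := fun g hg =>
    (integral_add_adjacent_intervals (hg.intervalIntegrable_of_Icc_subset hac hcb hbd)
      (hg.intervalIntegrable_of_Icc_subset (hac.trans hcb) hbd le_rfl)).symm
  have outer := integral_mul_integral_mul_le_of_monotoneOn_of_le hac le_rfl hcd hf hr hf0 hr_mono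
  have inner := integral_mul_integral_mul_le_of_monotoneOn_of_le (a := c) hcb le_rfl hbd
    (hf.mono (Icc_subset_Icc_left hac)) (hr.mono (Icc_subset_Icc_left hac))
    (fun θ hθ => hf0 θ ⟨hac.trans hθ.1, hθ.2⟩) (hr_mono.mono (Icc_subset_Icc_left hac))
  rw [split_ab f hf, split_ab _ hrf]
  rw [split_cd f hf, split_cd _ hrf] at outer ⊢
  linear_combination outer + inner

end MonotoneRatio

section Kernel

variable {σ : ℝ}

theorem continuousOn_exp_neg_div (c : ℝ) :
    ContinuousOn (fun θ => Real.exp (-c / (σ + θ))) (Ioi (-σ)) :=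
  Real.continuous_exp.comp_continuousOn <| continuousOn_const.div
    (continuous_const_add σ).continuousOn fun θ hθ => by rw [mem_Ioi] at hθ; linarith

theorem continuousOn_inv_pow_mul_exp_neg_div (n : ℕ) (z : ℝ) :
    ContinuousOn (fun θ => ((σ + θ) ^ n)⁻¹ * Real.exp (-z / (σ + θ))) (Ioi (-σ)) :=
  (((continuous_const_add σ).continuousOn.pow n).inv₀ fun θ hθ =>
    pow_ne_zero _ (by rw [mem_Ioi] at hθ; linarith)).mul (continuousOn_exp_neg_div z)

theorem inv_pow_mul_exp_neg_div_nonneg (n : ℕ) (z : ℝ) {θ : ℝ} (hθ : θ ∈ Ioi (-σ)) :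
    0 ≤ ((σ + θ) ^ n)⁻¹ * Real.exp (-z / (σ + θ)) := by
  have : 0 < σ + θ := by rw [mem_Ioi] at hθ; linarith
  positivity

theorem monotoneOn_exp_neg_div {c : ℝ} (hc : 0 ≤ c) :
    MonotoneOn (fun θ => Real.exp (-c / (σ + θ))) (Ioi (-σ)) := by
  intro θ₁ hθ₁ θ₂ _ h
  rw [mem_Ioi] at hθ₁
  simp only [Real.exp_le_exp, neg_div, neg_le_neg_iff]
  exact div_le_div_of_nonneg_left hc (by linarith) (by linarith)

theorem inv_pow_mul_exp_neg_div_eq (n : ℕ) (x y θ : ℝ) :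
    ((σ + θ) ^ n)⁻¹ * Real.exp (-y / (σ + θ)) =
      Real.exp (-(y - x) / (σ + θ)) * (((σ + θ) ^ n)⁻¹ * Real.exp (-x / (σ + θ))) := by
  rw [mul_left_comm, ← Real.exp_add]
  ring_nf

end Kernel

theorem awgn_likelihood_ratio_monotone_general
    (n : ℕ)
    (σw2 ζ σa2 : ℝ) (hσw2 : 0 < σw2) (hζ : 0 < ζ) (hσa2 : 0 < σa2)
    (D N : ℝ → ℝ)
    (hD : ∀ z : ℝ, D z =
      ∫ θ in (0:ℝ)..ζ, ((σw2 + θ) ^ n)⁻¹ * Real.exp (-z / (σw2 + θ)))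
    (hN : ∀ z : ℝ, N z =
      ∫ θ in σa2..(σa2 + ζ), ((σw2 + θ) ^ n)⁻¹ * Real.exp (-z / (σw2 + θ))) :
    ∀ x y : ℝ, 0 ≤ x → x ≤ y → N x * D y ≤ N y * D x := by
  intro x y _ hxy
  have hsub : Icc 0 (σa2 + ζ) ⊆ Ioi (-σw2) := fun θ hθ => by
    rw [mem_Ioi]; linarith [hθ.1]
  have key := integral_mul_integral_mul_le_of_monotoneOn hζ.le (by linarith) hσa2.le
    (by linarith) ((continuousOn_inv_pow_mul_exp_neg_div n x).mono hsub)
    ((continuousOn_exp_neg_div (y - x)).mono hsub)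
    (fun θ hθ => inv_pow_mul_exp_neg_div_nonneg n x (hsub hθ))
    ((monotoneOn_exp_neg_div (σ := σw2) (sub_nonneg.2 hxy)).mono hsub)
  simp only [← inv_pow_mul_exp_neg_div_eq] at key
  rw [hD, hD, hN, hN]
  exact key

/-- Lemma 2 (AWGN case): the likelihood ratio `N z / D z` of Willie's optimal
test is nondecreasing in the total received power `z`, so the optimal detector
is a threshold test on the received power. -/
theorem awgn_likelihood_ratio_monotone
    (n : ℕ) (hn : 1 ≤ n)
    (σw2 ζ σa2 : ℝ) (hσw2 : 0 < σw2) (hζ : 0 < ζ) (hσa2 : 0 < σa2)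
    (D N : ℝ → ℝ)
    (hD : ∀ z : ℝ, D z =
      ∫ θ in (0:ℝ)..ζ, ((σw2 + θ) ^ n)⁻¹ * Real.exp (-z / (σw2 + θ)))
    (hN : ∀ z : ℝ, N z =
      ∫ θ in σa2..(σa2 + ζ), ((σw2 + θ) ^ n)⁻¹ * Real.exp (-z / (σw2 + θ))) :
    ∀ x y : ℝ, 0 ≤ x → x ≤ y → N x * D y ≤ N y * D x :=
  awgn_likelihood_ratio_monotone_general n σw2 ζ σa2 hσw2 hζ hσa2 D N hD hN
end

section
/- Fix an integer n ≥ 1 and reals σ_w² > 0, ζ > 0, σ_a² > 0. For z ≥ 0 define D(z) = ∫_{σ_w²}^∞ v^{-n} e^{-z/v} e^{-v/ζ} dv and N(z) = ∫_{σ_w²+σ_a²}^∞ v^{-n} e^{-z/v} e^{-v/ζ} dv (both integrals are finite). Then the likelihood ratio Λ(z) = e^{σ_a²/ζ}·N(z)/D(z) is strictly increasing on [0,∞): for every z ≥ 0 and Δ > 0, N(z+Δ)·D(z) > N(z)·D(z+Δ). -/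
/-!
Split `D = I + N`, where `I` integrates the same kernel over `(σ_w², σ_w² + σ_a²]`.
Increasing `z` by `Δ` multiplies the kernel pointwise by `exp (-Δ / v)`, which is increasing
in `v`; with `c = exp (-Δ / (σ_w² + σ_a²))` this gives `I (z + Δ) ≤ c I z` and
`N (z + Δ) > c N z`, hence `N z · I (z + Δ) < N (z + Δ) · I z`, which is the claim once
`N z · N (z + Δ)` is added to both sides.
-/

open MeasureTheory Set

lemma setIntegral_pos_of_forall_pos {X : Type*} [MeasurableSpace X] {μ : Measure X}
    {f : X → ℝ} {s : Set X} (hs : MeasurableSet s) (hμs : 0 < μ s)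
    (hf : IntegrableOn f s μ) (hpos : ∀ x ∈ s, 0 < f x) : 0 < ∫ x in s, f x ∂μ := by
  rw [setIntegral_pos_iff_support_of_nonneg_ae
    ((ae_restrict_mem hs).mono fun x hx => (hpos x hx).le) hf]
  exact hμs.trans_le (measure_mono fun x hx => ⟨(hpos x hx).ne', hx⟩)

/-- Monotone likelihood ratio: the tail `(a, ∞)` carries a strictly larger share of `∫ g` than
of `∫ f` over `(b, ∞)`. -/
lemma setIntegral_Ioi_mul_lt_of_le_of_lt {μ : Measure ℝ} {f g : ℝ → ℝ} {a b c : ℝ}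
    (hba : b ≤ a) (hμIoc : 0 < μ (Ioc b a)) (hμIoi : 0 < μ (Ioi a))
    (hf : IntegrableOn f (Ioi b) μ) (hg : IntegrableOn g (Ioi b) μ)
    (hf_pos : ∀ v ∈ Ioi b, 0 < f v)
    (hle : ∀ v ∈ Ioc b a, g v ≤ c * f v) (hlt : ∀ v ∈ Ioi a, c * f v < g v) :
    (∫ v in Ioi a, f v ∂μ) * ∫ v in Ioi b, g v ∂μ <
      (∫ v in Ioi a, g v ∂μ) * ∫ v in Ioi b, f v ∂μ := by
  have split (h : ℝ → ℝ) (hh : IntegrableOn h (Ioi b) μ) :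
      ∫ v in Ioi b, h v ∂μ = (∫ v in Ioc b a, h v ∂μ) + ∫ v in Ioi a, h v ∂μ := by
    rw [← Ioc_union_Ioi_eq_Ioi hba, setIntegral_union Ioc_disjoint_Ioi_same measurableSet_Ioi
      (hh.mono_set Ioc_subset_Ioi_self) (hh.mono_set (Ioi_subset_Ioi hba))]
  have hfa := hf.mono_set (Ioi_subset_Ioi hba)
  have hga := hg.mono_set (Ioi_subset_Ioi hba)
  have hfab := hf.mono_set (Ioc_subset_Ioi_self : Ioc b a ⊆ Ioi b)
  have hf_Ioc_pos : 0 < ∫ v in Ioc b a, f v ∂μ :=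
    setIntegral_pos_of_forall_pos measurableSet_Ioc hμIoc hfab fun v hv => hf_pos v hv.1
  have hf_Ioi_pos : 0 < ∫ v in Ioi a, f v ∂μ :=
    setIntegral_pos_of_forall_pos measurableSet_Ioi hμIoi hfa
      fun v hv => hf_pos v (hba.trans_lt hv)
  have hg_Ioc_le : ∫ v in Ioc b a, g v ∂μ ≤ c * ∫ v in Ioc b a, f v ∂μ := by
    rw [← integral_const_mul]
    exact setIntegral_mono_on (hg.mono_set Ioc_subset_Ioi_self) (hfab.const_mul c)
      measurableSet_Ioc hle
  have hg_Ioi_gt : c * ∫ v in Ioi a, f v ∂μ < ∫ v in Ioi a, g v ∂μ := by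
    rw [← integral_const_mul, ← sub_pos, ← integral_sub hga (hfa.const_mul c)]
    exact setIntegral_pos_of_forall_pos measurableSet_Ioi hμIoi (hga.sub (hfa.const_mul c))
      fun v hv => sub_pos.mpr (hlt v hv)
  rw [split f hf, split g hg]
  nlinarith [mul_le_mul_of_nonneg_left hg_Ioc_le hf_Ioi_pos.le,
    mul_lt_mul_of_pos_right hg_Ioi_gt hf_Ioc_pos]

noncomputable def fadingKernel (n : ℕ) (ζ z v : ℝ) : ℝ :=
  (v ^ n)⁻¹ * Real.exp (-z / v) * Real.exp (-v / ζ)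

lemma fadingKernel_pos (n : ℕ) (ζ z : ℝ) {v : ℝ} (hv : 0 < v) : 0 < fadingKernel n ζ z v := by
  unfold fadingKernel
  positivity

lemma fadingKernel_add (n : ℕ) (ζ z Δ v : ℝ) :
    fadingKernel n ζ (z + Δ) v = Real.exp (-Δ / v) * fadingKernel n ζ z v := by
  simp only [fadingKernel, neg_add, add_div, Real.exp_add]
  ring

lemma fadingKernel_integrableOn_Ioi (n : ℕ) {ζ b z : ℝ} (hζ : 0 < ζ) (hb : 0 < b)
    (hz : 0 ≤ z) : IntegrableOn (fadingKernel n ζ z) (Ioi b) := by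
  refine ((exp_neg_integrableOn_Ioi b (inv_pos.mpr hζ)).const_mul (b ^ n)⁻¹).mono'
    (by unfold fadingKernel; fun_prop) ?_
  filter_upwards [ae_restrict_mem measurableSet_Ioi] with v (hv : b < v)
  have hv0 : 0 < v := hb.trans hv
  have hexp : Real.exp (-z / v) ≤ 1 :=
    Real.exp_le_one_iff.mpr (div_nonpos_of_nonpos_of_nonneg (neg_nonpos.mpr hz) hv0.le)
  rw [Real.norm_of_nonneg (fadingKernel_pos n ζ z hv0).le, fadingKernel,
    show -ζ⁻¹ * v = -v / ζ by ring]
  gcongr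
  exact (mul_le_of_le_one_right (by positivity) hexp).trans (by gcongr)

lemma strictMonoOn_exp_neg_div {Δ : ℝ} (hΔ : 0 < Δ) :
    StrictMonoOn (fun v => Real.exp (-Δ / v)) (Ioi 0) := by
  intro u (hu : 0 < u) v _ huv
  simp only [Real.exp_lt_exp, neg_div, neg_lt_neg_iff]
  exact div_lt_div_of_pos_left hΔ hu huv

theorem fading_likelihood_ratio_strict_mono_general
    (n : ℕ)
    (σw2 ζ σa2 : ℝ) (hσw2 : 0 < σw2) (hζ : 0 < ζ) (hσa2 : 0 < σa2)
    (D N : ℝ → ℝ)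
    (hD : ∀ z : ℝ, D z =
      ∫ v in Set.Ioi σw2, (v ^ n)⁻¹ * Real.exp (-z / v) * Real.exp (-v / ζ))
    (hN : ∀ z : ℝ, N z =
      ∫ v in Set.Ioi (σw2 + σa2),
        (v ^ n)⁻¹ * Real.exp (-z / v) * Real.exp (-v / ζ)) :
    (∀ z : ℝ, 0 ≤ z → IntegrableOn
      (fun v => (v ^ n)⁻¹ * Real.exp (-z / v) * Real.exp (-v / ζ))
      (Set.Ioi σw2)) ∧
    (∀ z : ℝ, 0 ≤ z → IntegrableOn
      (fun v => (v ^ n)⁻¹ * Real.exp (-z / v) * Real.exp (-v / ζ))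
      (Set.Ioi (σw2 + σa2))) ∧
    (∀ z : ℝ, 0 ≤ z → ∀ Δ : ℝ, 0 < Δ →
      N z * D (z + Δ) < N (z + Δ) * D z) := by
  have hσ : 0 < σw2 + σa2 := by positivity
  refine ⟨fun z hz => fadingKernel_integrableOn_Ioi n hζ hσw2 hz,
    fun z hz => fadingKernel_integrableOn_Ioi n hζ hσ hz, fun z hz Δ hΔ => ?_⟩
  have hratio := strictMonoOn_exp_neg_div hΔ
  rw [hD, hD, hN, hN]
  refine setIntegral_Ioi_mul_lt_of_le_of_lt (f := fadingKernel n ζ z)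
    (g := fadingKernel n ζ (z + Δ)) (c := Real.exp (-Δ / (σw2 + σa2)))
    (by linarith) (by simp [hσa2]) (by simp)
    (fadingKernel_integrableOn_Ioi n hζ hσw2 hz)
    (fadingKernel_integrableOn_Ioi n hζ hσw2 (by linarith))
    (fun v hv => fadingKernel_pos n ζ z (hσw2.trans hv)) (fun v hv => ?_) (fun v hv => ?_)
  · have hv0 : 0 < v := hσw2.trans hv.1
    rw [fadingKernel_add]
    exact mul_le_mul_of_nonneg_right (hratio.monotoneOn hv0 hσ hv.2)
      (fadingKernel_pos n ζ z hv0).le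
  · have hv0 : 0 < v := hσ.trans hv
    rw [fadingKernel_add]
    exact mul_lt_mul_of_pos_right (hratio hσ hv0 hv) (fadingKernel_pos n ζ z hv0)

/-- Lemma 3 / Appendix C (M = 1 block fading): the exponential-mixture
likelihood ratio `Λ(z) = e^{σ_a²/ζ} N(z)/D(z)` is strictly increasing in the
total received power `z`; moreover both integrals are finite. -/
theorem fading_likelihood_ratio_strict_mono
    (n : ℕ) (hn : 1 ≤ n)
    (σw2 ζ σa2 : ℝ) (hσw2 : 0 < σw2) (hζ : 0 < ζ) (hσa2 : 0 < σa2)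
    (D N : ℝ → ℝ)
    (hD : ∀ z : ℝ, D z =
      ∫ v in Set.Ioi σw2, (v ^ n)⁻¹ * Real.exp (-z / v) * Real.exp (-v / ζ))
    (hN : ∀ z : ℝ, N z =
      ∫ v in Set.Ioi (σw2 + σa2),
        (v ^ n)⁻¹ * Real.exp (-z / v) * Real.exp (-v / ζ)) :
    (∀ z : ℝ, 0 ≤ z → IntegrableOn
      (fun v => (v ^ n)⁻¹ * Real.exp (-z / v) * Real.exp (-v / ζ))
      (Set.Ioi σw2)) ∧
    (∀ z : ℝ, 0 ≤ z → IntegrableOn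
      (fun v => (v ^ n)⁻¹ * Real.exp (-z / v) * Real.exp (-v / ζ))
      (Set.Ioi (σw2 + σa2))) ∧
    (∀ z : ℝ, 0 ≤ z → ∀ Δ : ℝ, 0 < Δ →
      N z * D (z + Δ) < N (z + Δ) * D z) :=
  fading_likelihood_ratio_strict_mono_general n σw2 ζ σa2 hσw2 hζ hσa2 D N hD hN
end

section
/- Fix reals σ_w² > 0, ζ > 0 and ε ∈ (0,1), and set σ_a² = ζε/4. For each integer n ≥ 1 let G_n be a random variable with the Gamma(n,1) distribution (density t^{n−1}e^{−t}/(n−1)! on (0,∞)) and let U be uniform on [0,1], independent of G_n. Then there exists N such that for all n ≥ N and every threshold τ ∈ ℝ: P((σ_w² + ζU)·G_n/n ≥ τ) + P((σ_w² + ζU + σ_a²)·G_n/n < τ) > 1 − ε. -/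
open MeasureTheory ProbabilityTheory

/-!
Write `X = S G/n` and `Y = (S + σ_a²) G/n` with `S = σ_w² + ζU`. Whatever the threshold,
`P_FA + P_MD ≥ 1 - P(X < τ ≤ Y)`. Since `Var G_n = n`, Chebyshev keeps `G_n/n` within `δ` of `1`
outside an event of probability `1/(nδ²)`, and there `X < τ ≤ Y` confines `S` to an interval of
length `σ_a² + O(δ)`. As `S` is uniform on an interval of length `ζ`, it falls in that window with
probability at most `(σ_a² + O(δ))/ζ ≤ ε/2` for `δ` small, so `P(X < τ ≤ Y) < ε` for `n` large.
-/

lemma exists_Ico_forall_mem_of_mul_lt_le_add_mul {c K δ τ : ℝ} (hc : 0 ≤ c) (hK : 0 ≤ K)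
    (hδ : 0 < δ) (hδ2 : δ ≤ 1 / 2) :
    ∃ p q : ℝ, q - p ≤ c + 4 * δ * K ∧ ∀ s r : ℝ, 0 < s → s + c ≤ K → |r - 1| < δ →
      s * r < τ → τ ≤ (s + c) * r → s ∈ Set.Ico p q := by
  have hδ1 : 0 < 1 - δ := by linarith
  by_cases hτ : 0 < τ ∧ τ ≤ K * (1 + δ)
  · refine ⟨τ / (1 + δ) - c, τ / (1 - δ), ?_, fun s r hs _ hr hlt hle => ?_⟩
    · have hwidth : τ / (1 - δ) - τ / (1 + δ) = 2 * δ * τ / ((1 - δ) * (1 + δ)) := by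
        field_simp
        ring
      have : 2 * δ * τ / ((1 - δ) * (1 + δ)) ≤ 4 * δ * K := by
        rw [div_le_iff₀ (by positivity)]
        nlinarith [mul_le_mul_of_nonneg_left hτ.2 hδ.le,
          mul_nonneg (mul_nonneg (mul_nonneg hδ.le hK) (by linarith : (0 : ℝ) ≤ 1 + δ))
            (by linarith : 0 ≤ 1 - 2 * δ)]
      linarith
    obtain ⟨hr1, hr2⟩ := abs_lt.mp hr
    constructor
    · rw [sub_le_iff_le_add, div_le_iff₀ (by linarith)]
      nlinarith
    · rw [lt_div_iff₀ hδ1]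
      nlinarith
  · refine ⟨0, 0, by rw [sub_self]; positivity, fun s r hs hsK hr hlt hle => absurd ⟨?_, ?_⟩ hτ⟩
    all_goals obtain ⟨hr1, hr2⟩ := abs_lt.mp hr
    · nlinarith
    · nlinarith

namespace ProbabilityTheory

variable {a r : ℝ}

lemma ofReal_mul_gammaPDF (ha : 0 < a) (hr : 0 < r) (x : ℝ) :
    ENNReal.ofReal x * gammaPDF a r x = ENNReal.ofReal (a / r) * gammaPDF (a + 1) r x := by
  rcases lt_or_ge x 0 with hx | hx
  · simp [gammaPDF_of_neg hx]
  rw [gammaPDF_of_nonneg hx, gammaPDF_of_nonneg hx, ← ENNReal.ofReal_mul hx,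
    ← ENNReal.ofReal_mul (by positivity)]
  have hxa : x * x ^ (a - 1) = x ^ (a + 1 - 1) := by
    rw [add_sub_cancel_right, ← Real.rpow_one_add' hx (by simp [ha.ne']), add_sub_cancel]
  have hΓ := (Real.Gamma_pos_of_pos ha).ne'
  rw [Real.Gamma_add_one ha.ne', Real.rpow_add_one hr.ne', ← hxa]
  field_simp

lemma lintegral_ofReal_mul_gammaMeasure (ha : 0 < a) (hr : 0 < r) {f : ℝ → ENNReal}
    (hf : Measurable f) :
    ∫⁻ x, ENNReal.ofReal x * f x ∂gammaMeasure a r =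
      ENNReal.ofReal (a / r) * ∫⁻ x, f x ∂gammaMeasure (a + 1) r := by
  have hpdf (b : ℝ) : Measurable (gammaPDF b r) := (measurable_gammaPDFReal b r).ennreal_ofReal
  rw [gammaMeasure, gammaMeasure, lintegral_withDensity_eq_lintegral_mul _ (hpdf a) (by fun_prop),
    lintegral_withDensity_eq_lintegral_mul _ (hpdf _) hf, ← lintegral_const_mul _ (by fun_prop)]
  congr 1 with x
  simp only [Pi.mul_apply]
  rw [← mul_assoc, mul_comm (gammaPDF a r x), ofReal_mul_gammaPDF ha hr, mul_assoc]

lemma lintegral_ofReal_gammaMeasure (ha : 0 < a) (hr : 0 < r) :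
    ∫⁻ x, ENNReal.ofReal x ∂gammaMeasure a r = ENNReal.ofReal (a / r) := by
  have := isProbabilityMeasure_gammaMeasure (ha.trans (lt_add_one a)) hr
  simpa using lintegral_ofReal_mul_gammaMeasure ha hr (f := 1) measurable_const

lemma lintegral_sq_sub_mean_gammaMeasure (ha : 0 < a) (hr : 0 < r) :
    ∫⁻ x, ENNReal.ofReal ((x - a / r) ^ 2) ∂gammaMeasure a r = ENNReal.ofReal (a / r ^ 2) := by
  have := isProbabilityMeasure_gammaMeasure ha hr
  have hpos : ∀ᵐ x ∂gammaMeasure a r, 0 ≤ x := by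
    rw [gammaMeasure, ae_withDensity_iff (f := gammaPDF a r)
      (measurable_gammaPDFReal a r).ennreal_ofReal]
    exact ae_of_all _ fun x hx => not_lt.mp fun h => hx (gammaPDF_of_neg h)
  -- with `m = a / r`, every term of `(x - m)² + 2 m x = x² + m²` is nonnegative on the support
  have hexpand : ∀ᵐ x ∂gammaMeasure a r,
      ENNReal.ofReal ((x - a / r) ^ 2) + ENNReal.ofReal (2 * (a / r)) * ENNReal.ofReal x =
        ENNReal.ofReal x * ENNReal.ofReal x + ENNReal.ofReal ((a / r) ^ 2) := by
    filter_upwards [hpos] with x hx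
    rw [← ENNReal.ofReal_mul hx, ← ENNReal.ofReal_mul (by positivity),
      ← ENNReal.ofReal_add (by positivity) (by positivity),
      ← ENNReal.ofReal_add (by positivity) (by positivity)]
    ring_nf
  have hmoments := lintegral_congr_ae hexpand
  rw [lintegral_add_left (by fun_prop), lintegral_const_mul _ (by fun_prop),
    lintegral_add_right _ measurable_const, lintegral_ofReal_mul_gammaMeasure ha hr
      ENNReal.measurable_ofReal, lintegral_ofReal_gammaMeasure ha hr,
    lintegral_ofReal_gammaMeasure (ha.trans (lt_add_one a)) hr, lintegral_const, measure_univ,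
    mul_one] at hmoments
  have hrhs : ENNReal.ofReal (a / r) * ENNReal.ofReal ((a + 1) / r) + ENNReal.ofReal ((a / r) ^ 2) =
      ENNReal.ofReal (a / r ^ 2) + ENNReal.ofReal (2 * (a / r)) * ENNReal.ofReal (a / r) := by
    rw [← ENNReal.ofReal_mul (by positivity), ← ENNReal.ofReal_mul (by positivity),
      ← ENNReal.ofReal_add (by positivity) (by positivity),
      ← ENNReal.ofReal_add (by positivity) (by positivity)]
    congr 1
    field_simp
    ring
  rw [hrhs] at hmoments
  exact (ENNReal.add_left_inj (by finiteness)).mp hmoments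

lemma gammaMeasure_le_abs_sub_mean_le (ha : 0 < a) (hr : 0 < r) {t : ℝ} (ht : 0 < t) :
    gammaMeasure a r {x | t ≤ |x - a / r|} ≤ ENNReal.ofReal (a / (r * t) ^ 2) := by
  calc gammaMeasure a r {x | t ≤ |x - a / r|}
      ≤ gammaMeasure a r {x | ENNReal.ofReal (t ^ 2) ≤ ENNReal.ofReal ((x - a / r) ^ 2)} := by
        refine measure_mono fun x hx => ENNReal.ofReal_le_ofReal ?_
        simpa only [sq_abs] using pow_le_pow_left₀ ht.le hx 2
    _ ≤ (∫⁻ x, ENNReal.ofReal ((x - a / r) ^ 2) ∂gammaMeasure a r) / ENNReal.ofReal (t ^ 2) :=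
        meas_ge_le_lintegral_div (by fun_prop) (by simp [ht.ne']) ENNReal.ofReal_ne_top
    _ = ENNReal.ofReal (a / (r * t) ^ 2) := by
        rw [lintegral_sq_sub_mean_gammaMeasure ha hr, ← ENNReal.ofReal_div_of_pos (by positivity)]
        congr 1
        field_simp

lemma gammaMeasure_le_abs_div_mean_sub_one_le (ha : 0 < a) (hr : 0 < r) {δ : ℝ} (hδ : 0 < δ) :
    gammaMeasure a r {x | δ ≤ |x / (a / r) - 1|} ≤ ENNReal.ofReal (1 / (a * δ ^ 2)) := by
  have hm : 0 < a / r := by positivity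
  have hset : {x | δ ≤ |x / (a / r) - 1|} = {x | a / r * δ ≤ |x - a / r|} := by
    ext x
    rw [Set.mem_ofPred_eq, Set.mem_ofPred_eq, div_sub_one hm.ne', abs_div, abs_of_pos hm,
      le_div_iff₀ hm, mul_comm]
  rw [hset]
  convert gammaMeasure_le_abs_sub_mean_le ha hr (mul_pos hm hδ) using 2
  field_simp

end ProbabilityTheory

section Threshold

variable {Ω : Type*} [MeasurableSpace Ω] {μ : Measure Ω}

lemma one_sub_measureReal_between_le_add [IsProbabilityMeasure μ] (X Y : Ω → ℝ) (τ : ℝ) :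
    1 - μ.real {ω | X ω < τ ∧ τ ≤ Y ω} ≤ μ.real {ω | τ ≤ X ω} + μ.real {ω | Y ω < τ} := by
  have hcover : Set.univ ⊆ ({ω | τ ≤ X ω} ∪ {ω | Y ω < τ}) ∪ {ω | X ω < τ ∧ τ ≤ Y ω} := by
    intro ω _
    by_cases hX : τ ≤ X ω
    · exact Or.inl (Or.inl hX)
    by_cases hY : Y ω < τ
    · exact Or.inl (Or.inr hY)
    exact Or.inr ⟨not_le.mp hX, not_lt.mp hY⟩
  have hunion := (measureReal_mono (μ := μ) hcover).trans (measureReal_union_le _ _)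
  rw [probReal_univ] at hunion
  linarith [measureReal_union_le (μ := μ) {ω | τ ≤ X ω} {ω | Y ω < τ}]

lemma exists_Ico_measure_mul_lt_le_add_mul_le {S R : Ω → ℝ} {c K δ : ℝ} (hc : 0 ≤ c) (hK : 0 ≤ K)
    (hδ : 0 < δ) (hδ2 : δ ≤ 1 / 2) (hS : ∀ᵐ ω ∂μ, 0 < S ω ∧ S ω + c ≤ K) (τ : ℝ) :
    ∃ p q : ℝ, q - p ≤ c + 4 * δ * K ∧ μ {ω | S ω * R ω < τ ∧ τ ≤ (S ω + c) * R ω} ≤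
      μ {ω | δ ≤ |R ω - 1|} + μ (S ⁻¹' Set.Ico p q) := by
  obtain ⟨p, q, hpq, hmem⟩ := exists_Ico_forall_mem_of_mul_lt_le_add_mul (τ := τ) hc hK hδ hδ2
  refine ⟨p, q, hpq, (measure_mono_ae ?_).trans (measure_union_le _ _)⟩
  filter_upwards [hS] with ω ⟨hSpos, hSK⟩ ⟨hlt, hle⟩
  by_cases hR : δ ≤ |R ω - 1|
  · exact Or.inl hR
  · exact Or.inr (hmem _ _ hSpos hSK (not_le.mp hR) hlt hle)

lemma measure_const_add_mul_mem_Ico_le {U : Ω → ℝ} (hU : Measurable U) {s : Set ℝ}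
    (hU_law : μ.map U = volume.restrict s) {a b : ℝ} (hb : 0 < b) (p q : ℝ) :
    μ ((fun ω => a + b * U ω) ⁻¹' Set.Ico p q) ≤ ENNReal.ofReal ((q - p) / b) := by
  have hpre : (fun ω => a + b * U ω) ⁻¹' Set.Ico p q =
      U ⁻¹' Set.Ico ((p - a) / b) ((q - a) / b) := by
    ext ω
    simp only [Set.mem_preimage, Set.mem_Ico, div_le_iff₀ hb, lt_div_iff₀ hb]
    constructor <;> rintro ⟨h1, h2⟩ <;> constructor <;> linarith
  rw [hpre, ← Measure.map_apply hU measurableSet_Ico, hU_law]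
  refine (Measure.restrict_apply_le _ _).trans_eq ?_
  rw [Real.volume_Ico]
  congr 1
  ring

end Threshold

lemma measure_mul_gamma_lt_le_add_mul_gamma_le {Ω : Type*} [MeasurableSpace Ω] {μ : Measure Ω}
    {σ ζ c δ a : ℝ} (hσ : 0 < σ) (hζ : 0 < ζ) (hc : 0 ≤ c) (hδ : 0 < δ) (hδ2 : δ ≤ 1 / 2)
    (ha : 0 < a) {G U : Ω → ℝ} (hG : Measurable G) (hU : Measurable U)
    (hG_law : μ.map G = gammaMeasure a 1) (hU_law : μ.map U = volume.restrict (Set.Icc 0 1))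
    (τ : ℝ) :
    μ {ω | (σ + ζ * U ω) * (G ω / a) < τ ∧ τ ≤ (σ + ζ * U ω + c) * (G ω / a)} ≤
      ENNReal.ofReal (1 / (a * δ ^ 2)) + ENNReal.ofReal ((c + 4 * δ * (σ + ζ + c)) / ζ) := by
  have hS : ∀ᵐ ω ∂μ, 0 < σ + ζ * U ω ∧ σ + ζ * U ω + c ≤ σ + ζ + c := by
    filter_upwards [ae_of_ae_map hU.aemeasurable (hU_law ▸ ae_restrict_mem measurableSet_Icc)]
      with ω ⟨hU0, hU1⟩
    constructor <;> nlinarith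
  obtain ⟨p, q, hpq, hE⟩ := exists_Ico_measure_mul_lt_le_add_mul_le (R := fun ω => G ω / a)
    hc (by positivity) hδ hδ2 hS τ
  have hR : μ {ω | δ ≤ |G ω / a - 1|} ≤ ENNReal.ofReal (1 / (a * δ ^ 2)) := by
    have := gammaMeasure_le_abs_div_mean_sub_one_le ha one_pos hδ
    rwa [div_one, ← hG_law, Measure.map_apply hG
      (measurableSet_le measurable_const (by fun_prop))] at this
  refine hE.trans (add_le_add hR ((measure_const_add_mul_mem_Ico_le hU hU_law hζ p q).trans ?_))
  gcongr

theorem awgn_covertness_core_general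
    (σw2 ζ ε : ℝ) (hσw2 : 0 < σw2) (hζ : 0 < ζ) (hε : ε ∈ Set.Ioo (0:ℝ) 1)
    (Ω : Type*) [MeasureSpace Ω] [IsProbabilityMeasure (ℙ : Measure Ω)]
    (G : ℕ → Ω → ℝ) (U : Ω → ℝ)
    (hG_meas : ∀ n, Measurable (G n)) (hU_meas : Measurable U)
    (hG_law : ∀ n : ℕ, 1 ≤ n → Measure.map (G n) ℙ = gammaMeasure n 1)
    (hU_law : Measure.map U ℙ = volume.restrict (Set.Icc (0:ℝ) 1)) :
    ∃ N : ℕ, ∀ n : ℕ, N ≤ n → ∀ τ : ℝ,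
      (ℙ {ω : Ω | τ ≤ (σw2 + ζ * U ω) * G n ω / n}).toReal +
      (ℙ {ω : Ω | (σw2 + ζ * U ω + ζ * ε / 4) * G n ω / n < τ}).toReal
        > 1 - ε := by
  obtain ⟨hε0, -⟩ := hε
  set c := ζ * ε / 4 with hc_def
  obtain ⟨δ, hδ0, hδ2, hδK⟩ : ∃ δ : ℝ, 0 < δ ∧ δ ≤ 1 / 2 ∧ 4 * δ * (σw2 + ζ + c) ≤ c :=
    ⟨min (1 / 2) (c / (4 * (σw2 + ζ + c))), by positivity, min_le_left _ _, by
      rw [mul_comm 4, mul_assoc, ← le_div_iff₀ (by positivity)]; exact min_le_right _ _⟩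
  have hwidth : (c + 4 * δ * (σw2 + ζ + c)) / ζ ≤ ε / 2 := by
    rw [div_le_iff₀ hζ]
    linarith [hc_def]
  obtain ⟨N, hN⟩ := Filter.eventually_atTop.mp ((Filter.eventually_ge_atTop 1).and
    ((tendsto_const_div_atTop_nhds_zero_nat (1 / δ ^ 2)).eventually (gt_mem_nhds (half_pos hε0))))
  refine ⟨N, fun n hn τ => ?_⟩
  obtain ⟨hn1, hcheb⟩ := hN n hn
  rw [div_div, mul_comm] at hcheb
  have hn0 : (0 : ℝ) < n := by exact_mod_cast hn1
  have hbetween : (ℙ {ω | (σw2 + ζ * U ω) * (G n ω / n) < τ ∧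
      τ ≤ (σw2 + ζ * U ω + c) * (G n ω / n)}).toReal < ε := by
    refine (ENNReal.toReal_le_of_le_ofReal (by positivity) ?_).trans_lt
      (by linarith : 1 / (n * δ ^ 2) + ε / 2 < ε)
    refine (measure_mul_gamma_lt_le_add_mul_gamma_le hσw2 hζ (by positivity) hδ0 hδ2 hn0 (hG_meas n)
      hU_meas (hG_law n hn1) hU_law τ).trans ?_
    rw [ENNReal.ofReal_add (by positivity) (by positivity)]
    exact add_le_add le_rfl (ENNReal.ofReal_le_ofReal hwidth)
  have := one_sub_measureReal_between_le_add (μ := ℙ) (fun ω => (σw2 + ζ * U ω) * (G n ω / n))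
    (fun ω => (σw2 + ζ * U ω + c) * (G n ω / n)) τ
  simp only [measureReal_def, mul_div_assoc] at this ⊢
  linarith

/-- Analytical core of Theorem 1 (all-AWGN channels, jammer power uniform on
`[0, P_max]` per slot): with Alice's received power fixed at `σ_a² = ζε/4`,
every sequence of thresholds gives `P_FA + P_MD > 1 - ε` for `n` large. -/
theorem awgn_covertness_core
    (σw2 ζ ε : ℝ) (hσw2 : 0 < σw2) (hζ : 0 < ζ) (hε : ε ∈ Set.Ioo (0:ℝ) 1)
    (Ω : Type*) [MeasureSpace Ω] [IsProbabilityMeasure (ℙ : Measure Ω)]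
    (G : ℕ → Ω → ℝ) (U : Ω → ℝ)
    (hG_meas : ∀ n, Measurable (G n)) (hU_meas : Measurable U)
    (hG_law : ∀ n : ℕ, 1 ≤ n → Measure.map (G n) ℙ = gammaMeasure n 1)
    (hU_law : Measure.map U ℙ = volume.restrict (Set.Icc (0:ℝ) 1))
    (hindep : ∀ n : ℕ, IndepFun (G n) U ℙ) :
    ∃ N : ℕ, ∀ n : ℕ, N ≤ n → ∀ τ : ℝ,
      (ℙ {ω : Ω | τ ≤ (σw2 + ζ * U ω) * G n ω / n}).toReal +
      (ℙ {ω : Ω | (σw2 + ζ * U ω + ζ * ε / 4) * G n ω / n < τ}).toReal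
        > 1 - ε :=
  awgn_covertness_core_general σw2 ζ ε hσw2 hζ hε Ω G U hG_meas hU_meas hG_law hU_law
end

section
/- Fix reals σ_w² > 0, ζ > 0 and ε ∈ (0,1). For each integer n ≥ 1 let G_n be a random variable with the Gamma(n,1) distribution (density t^{n−1}e^{−t}/(n−1)! on (0,∞)) and let E be an Exponential random variable with mean ζ, independent of G_n. Then there exists σ_a² > 0, not depending on n (one may take σ_a² = ζε/8), and an N such that for all n ≥ N and every threshold τ ∈ ℝ: P((σ_w² + E)·G_n/n ≥ τ) + P((σ_w² + E + σ_a²)·G_n/n < τ) > 1 − ε. -/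
/-!
Willie errs unless his statistic falls on the correct side of the threshold under both
hypotheses, so `P_FA + P_MD ≥ 1 - P(T₀ < τ ≤ T₁)`, where `T₀ = (σ_w² + E) G/n` and
`T₁ = (σ_w² + E + σ_a²) G/n`. Given `G = g`, the event `T₀ < τ ≤ T₁` confines `E` to an
interval of length `σ_a²` (and is empty when `g ≤ 0`). The exponential density is bounded by
its rate `1/ζ`, so this has conditional probability at most `σ_a²/ζ = ε/8`, uniformly in `g`,
`n` and `τ`.
-/

open MeasureTheory ProbabilityTheory Set
open scoped ENNReal

lemma exponentialPDF_le_ofReal {r : ℝ} (hr : 0 ≤ r) (x : ℝ) :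
    exponentialPDF r x ≤ ENNReal.ofReal r := by
  rw [exponentialPDF_eq]
  refine ENNReal.ofReal_le_ofReal ?_
  split_ifs with hx
  · exact mul_le_of_le_one_right hr
      (Real.exp_le_one_iff.mpr (neg_nonpos.mpr (mul_nonneg hr hx)))
  · exact hr

lemma expMeasure_le_ofReal_mul_volume {r : ℝ} (hr : 0 ≤ r) (s : Set ℝ) :
    expMeasure r s ≤ ENNReal.ofReal r * volume s := by
  rw [expMeasure, gammaMeasure, withDensity_apply']
  calc ∫⁻ x in s, gammaPDF 1 r x ≤ ∫⁻ _ in s, ENNReal.ofReal r :=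
        lintegral_mono fun x => exponentialPDF_le_ofReal hr x
    _ = ENNReal.ofReal r * volume s := setLIntegral_const s _

lemma volume_setOf_lt_and_le_add_mul_le {a c τ L : ℝ} (hL : 0 ≤ L) :
    volume {e : ℝ | (a + e) * c < τ ∧ τ ≤ (a + e + L) * c} ≤ ENNReal.ofReal L := by
  rcases le_or_gt c 0 with hc | hc
  · have hempty : {e : ℝ | (a + e) * c < τ ∧ τ ≤ (a + e + L) * c} = ∅ :=
      eq_empty_of_forall_notMem fun e ⟨h₁, h₂⟩ => by
        nlinarith [mul_nonpos_of_nonneg_of_nonpos hL hc]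
    simp [hempty]
  · calc volume {e : ℝ | (a + e) * c < τ ∧ τ ≤ (a + e + L) * c}
        ≤ volume (Ico (τ / c - a - L) (τ / c - a)) := by
          refine measure_mono fun e ⟨h₁, h₂⟩ => ⟨?_, ?_⟩
          · linarith [(div_le_iff₀ hc).mpr h₂]
          · linarith [(lt_div_iff₀ hc).mpr h₁]
      _ = ENNReal.ofReal L := by rw [Real.volume_Ico]; ring_nf

lemma expMeasure_setOf_lt_and_le_add_mul_le {r a c τ L : ℝ} (hr : 0 ≤ r) (hL : 0 ≤ L) :
    expMeasure r {e : ℝ | (a + e) * c < τ ∧ τ ≤ (a + e + L) * c} ≤ ENNReal.ofReal (r * L) :=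
  calc _ ≤ ENNReal.ofReal r * ENNReal.ofReal L :=
        (expMeasure_le_ofReal_mul_volume hr _).trans
          (mul_le_mul_right (volume_setOf_lt_and_le_add_mul_le hL) _)
    _ = ENNReal.ofReal (r * L) := (ENNReal.ofReal_mul hr).symm

lemma measure_preimage_prodMk_le_of_indepFun {Ω α β : Type*} [MeasurableSpace Ω]
    [MeasurableSpace α] [MeasurableSpace β] {μ : Measure Ω} [IsProbabilityMeasure μ]
    {X : Ω → α} {Y : Ω → β} (hX : Measurable X) (hY : Measurable Y) (hXY : IndepFun X Y μ)
    {S : Set (α × β)} (hS : MeasurableSet S) {δ : ℝ≥0∞}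
    (hsection : ∀ x, μ.map Y (Prod.mk x ⁻¹' S) ≤ δ) :
    μ ((fun ω => (X ω, Y ω)) ⁻¹' S) ≤ δ := by
  have : IsProbabilityMeasure (μ.map X) := Measure.isProbabilityMeasure_map hX.aemeasurable
  rw [← Measure.map_apply (hX.prodMk hY) hS,
    (indepFun_iff_map_prod_eq_prod_map_map hX.aemeasurable hY.aemeasurable).mp hXY,
    Measure.prod_apply hS]
  calc ∫⁻ x, μ.map Y (Prod.mk x ⁻¹' S) ∂μ.map X ≤ ∫⁻ _, δ ∂μ.map X := lintegral_mono hsection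
    _ = δ := by simp

lemma one_le_measureReal_add_measureReal_add_measureReal {Ω : Type*} [MeasurableSpace Ω]
    {μ : Measure Ω} [IsProbabilityMeasure μ] (T₀ T₁ : Ω → ℝ) (τ : ℝ) :
    1 ≤ μ.real {ω | τ ≤ T₀ ω} + μ.real {ω | T₁ ω < τ} + μ.real {ω | T₀ ω < τ ∧ τ ≤ T₁ ω} := by
  have hcover : univ ⊆ ({ω | τ ≤ T₀ ω} ∪ {ω | T₁ ω < τ}) ∪ {ω | T₀ ω < τ ∧ τ ≤ T₁ ω} := by
    intro ω _
    by_cases h₀ : τ ≤ T₀ ω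
    · exact Or.inl (Or.inl h₀)
    by_cases h₁ : T₁ ω < τ
    · exact Or.inl (Or.inr h₁)
    exact Or.inr ⟨not_le.mp h₀, not_lt.mp h₁⟩
  calc 1 = μ.real univ := probReal_univ.symm
    _ ≤ _ := measureReal_mono hcover
    _ ≤ _ := (measureReal_union_le _ _).trans
      (add_le_add_left (measureReal_union_le _ _) _)

theorem single_block_fading_covertness_core_general
    (σw2 ζ ε : ℝ) (hζ : 0 < ζ) (hε : ε ∈ Set.Ioo (0:ℝ) 1)
    (Ω : Type*) [MeasureSpace Ω] [IsProbabilityMeasure (ℙ : Measure Ω)]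
    (G : ℕ → Ω → ℝ) (E : Ω → ℝ)
    (hG_meas : ∀ n, Measurable (G n)) (hE_meas : Measurable E)
    (hE_law : Measure.map E ℙ = expMeasure ζ⁻¹)
    (hindep : ∀ n : ℕ, IndepFun (G n) E ℙ) :
    ∃ σa2 : ℝ, 0 < σa2 ∧ ∃ N : ℕ, ∀ n : ℕ, N ≤ n → ∀ τ : ℝ,
      (ℙ {ω : Ω | τ ≤ (σw2 + E ω) * G n ω / n}).toReal +
      (ℙ {ω : Ω | (σw2 + E ω + σa2) * G n ω / n < τ}).toReal
        > 1 - ε := by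
  obtain ⟨hε₀, -⟩ := hε
  have hσa2 : 0 < ζ * ε / 8 := by positivity
  refine ⟨ζ * ε / 8, hσa2, 0, fun n _ τ => ?_⟩
  set σa2 := ζ * ε / 8 with hσa2_def
  set S : Set (ℝ × ℝ) := {p | (σw2 + p.2) * p.1 / n < τ ∧ τ ≤ (σw2 + p.2 + σa2) * p.1 / n}
  have hS : MeasurableSet S := by unfold S; measurability
  have hsection (g : ℝ) : Measure.map E ℙ (Prod.mk g ⁻¹' S) ≤ ENNReal.ofReal (ε / 8) := by
    have hrate : ζ⁻¹ * σa2 = ε / 8 := by rw [hσa2_def]; field_simp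
    rw [hE_law, ← hrate]
    convert expMeasure_setOf_lt_and_le_add_mul_le (a := σw2) (c := g / n) (τ := τ)
      (inv_nonneg.mpr hζ.le) hσa2.le using 3
    simp only [S, mul_div_assoc]; rfl
  have hambiguous : (ℙ {ω | (σw2 + E ω) * G n ω / n < τ ∧
      τ ≤ (σw2 + E ω + σa2) * G n ω / n}).toReal ≤ ε / 8 :=
    ENNReal.toReal_le_of_le_ofReal (by positivity)
    (measure_preimage_prodMk_le_of_indepFun (hG_meas n) hE_meas (hindep n) hS hsection)
  have hcover := one_le_measureReal_add_measureReal_add_measureReal (μ := ℙ)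
    (fun ω => (σw2 + E ω) * G n ω / n) (fun ω => (σw2 + E ω + σa2) * G n ω / n) τ
  simp only [measureReal_def] at hcover
  linarith

/-- Analytical core of Theorem 2 (M = 1 Rayleigh block fading on the
jammer-to-Willie channel): there is a transmit power `σ_a² > 0` not depending
on the blocklength `n` such that every sequence of thresholds gives
`P_FA + P_MD > 1 - ε` for `n` large. -/
theorem single_block_fading_covertness_core
    (σw2 ζ ε : ℝ) (hσw2 : 0 < σw2) (hζ : 0 < ζ) (hε : ε ∈ Set.Ioo (0:ℝ) 1)
    (Ω : Type*) [MeasureSpace Ω] [IsProbabilityMeasure (ℙ : Measure Ω)]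
    (G : ℕ → Ω → ℝ) (E : Ω → ℝ)
    (hG_meas : ∀ n, Measurable (G n)) (hE_meas : Measurable E)
    (hG_law : ∀ n : ℕ, 1 ≤ n → Measure.map (G n) ℙ = gammaMeasure n 1)
    (hE_law : Measure.map E ℙ = expMeasure ζ⁻¹)
    (hindep : ∀ n : ℕ, IndepFun (G n) E ℙ) :
    ∃ σa2 : ℝ, 0 < σa2 ∧ ∃ N : ℕ, ∀ n : ℕ, N ≤ n → ∀ τ : ℝ,
      (ℙ {ω : Ω | τ ≤ (σw2 + E ω) * G n ω / n}).toReal +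
      (ℙ {ω : Ω | (σw2 + E ω + σa2) * G n ω / n < τ}).toReal
        > 1 - ε :=
  single_block_fading_covertness_core_general σw2 ζ ε hζ hε Ω G E hG_meas hE_meas hE_law hindep
end

section
/- Fix an integer M ≥ 1 and reals σ_w² > 0, ζ > 0, γ > 0, ε ∈ (0,1). For an integer k ≥ 1 and real σ_a² > 0, define Λ_{k,σ_a²}(z) = e^{σ_a²/ζ}·(∫_{σ_w²+σ_a²}^∞ v^{-k} e^{-z/v} e^{-v/ζ} dv)/(∫_{σ_w²}^∞ v^{-k} e^{-z/v} e^{-v/ζ} dv) for z ≥ 0. Let E₁,…,E_M be i.i.d. Exponential with mean ζ and G₁,…,G_M be i.i.d. with the Gamma(k,1) distribution, with all of these random variables mutually independent. Then there exists σ_a² > 0, not depending on k, and a K such that for all k ≥ K: P(∏_{m=1}^M Λ_{k,σ_a²}((σ_w² + E_m)·G_m) > γ) + P(∏_{m=1}^M Λ_{k,σ_a²}((σ_w² + E_m + σ_a²)·G_m) ≤ γ) > 1 − ε. -/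
/-!
Write the per-block ratio as `exp (σa2 / ζ) · I(σw2 + σa2) / I(σw2)`, where
`I(a) = ∫_a^∞ φ(v) e^{-v/ζ} dv` and `φ(v) = v⁻ᵏ e^{-z/v}`.

If `γ > 1`, take `σa2 = ζ log γ / M`: since `I` is decreasing, every factor is at most
`exp (σa2 / ζ) = γ ^ (1 / M)`, so the product never exceeds `γ` and a missed detection is
certain.

If `γ ≤ 1`, it is enough that under H₀ the product exceeds `1` with probability close to one.
For `z ≥ k c`, `φ` is increasing on `(0, c]` and `φ(q) ≥ e^{k α} φ(b)` with
`α = (q - b)(c - q)/(b q) > 0` for `b < q < c`. Hence, with `b = σw2 + σa2 < c`, the mass of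
`I(σw2)` on `(σw2, b]` is exponentially small compared with `I(b)`, and the ratio tends to
`exp (σa2 / ζ) > 1`. Under H₀ we have `z = (σw2 + E) G ≥ k c` for `c = σw2 + 3σa2/2` unless
`E ≤ 2σa2`, which has probability at most `2σa2/ζ`, or `G ≤ θ k` for a fixed `θ < 1`, which
has probability exponentially small in `k` by a Chernoff bound for the Gamma law. Choosing
`σa2` small and `k` large, a union bound over the `M` blocks concludes.
-/

open MeasureTheory ProbabilityTheory Real Set Filter Topology

namespace ProbabilityTheory

lemma ofReal_exp_mul_gammaPDF {a r t : ℝ} (hr : 0 < r) (ht : 0 ≤ t) (x : ℝ) :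
    ENNReal.ofReal (exp (-t * x)) * gammaPDF a r x =
      ENNReal.ofReal ((r / (r + t)) ^ a) * gammaPDF a (r + t) x := by
  rcases lt_or_ge x 0 with hx | hx
  · simp [gammaPDF_of_neg hx]
  have hrt : 0 < r + t := by linarith
  rw [gammaPDF_of_nonneg hx, gammaPDF_of_nonneg hx, ← ENNReal.ofReal_mul (exp_pos _).le,
    ← ENNReal.ofReal_mul (by positivity)]
  congr 1
  rw [div_rpow hr.le hrt.le]
  field_simp
  rw [mul_comm (exp _), mul_assoc, ← exp_add]
  ring_nf

lemma lintegral_ofReal_exp_gammaMeasure {a r t : ℝ} (ha : 0 < a) (hr : 0 < r) (ht : 0 ≤ t) :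
    ∫⁻ x, ENNReal.ofReal (exp (-t * x)) ∂gammaMeasure a r =
      ENNReal.ofReal ((r / (r + t)) ^ a) := by
  have hpdf (r : ℝ) : Measurable (gammaPDF a r) := (measurable_gammaPDFReal a r).ennreal_ofReal
  rw [gammaMeasure, lintegral_withDensity_eq_lintegral_mul _ (hpdf r) (by fun_prop)]
  simp_rw [Pi.mul_apply, mul_comm (gammaPDF a r _), ofReal_exp_mul_gammaPDF hr ht]
  rw [lintegral_const_mul _ (hpdf _),
    lintegral_gammaPDF_eq_one ha (by linarith), mul_one]

lemma gammaMeasure_Iic_le {a r t : ℝ} (ha : 0 < a) (hr : 0 < r) (ht : 0 ≤ t) (x : ℝ) :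
    gammaMeasure a r (Iic x) ≤ ENNReal.ofReal (exp (t * x) * (r / (r + t)) ^ a) := by
  calc gammaMeasure a r (Iic x)
      ≤ gammaMeasure a r {y | ENNReal.ofReal (exp (-t * x)) ≤ ENNReal.ofReal (exp (-t * y))} :=
        measure_mono fun y (hy : y ≤ x) => ENNReal.ofReal_le_ofReal (exp_le_exp.2 (by nlinarith))
    _ ≤ (∫⁻ y, ENNReal.ofReal (exp (-t * y)) ∂gammaMeasure a r) /
          ENNReal.ofReal (exp (-t * x)) :=
        meas_ge_le_lintegral_div (by fun_prop) (by simp [exp_pos]) ENNReal.ofReal_ne_top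
    _ = ENNReal.ofReal (exp (t * x) * (r / (r + t)) ^ a) := by
        rw [lintegral_ofReal_exp_gammaMeasure ha hr ht, ← ENNReal.ofReal_div_of_pos (exp_pos _),
          div_eq_mul_inv, ← exp_neg, mul_comm]
        ring_nf

lemma tendsto_measureReal_gammaMeasure_Iic_mul {θ : ℝ} (hθ : θ < 1) :
    Tendsto (fun k : ℕ => (gammaMeasure k 1).real (Iic (θ * k))) atTop (𝓝 0) := by
  obtain ⟨t, ht, rfl⟩ : ∃ t, 0 < t ∧ θ = 1 - t := ⟨1 - θ, sub_pos.2 hθ, by ring⟩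
  -- the Chernoff bound with parameter `t = 1 - θ` decays like `ρ ^ k`
  set ρ := exp (t * (1 - t)) * (1 / (1 + t))
  have hρ : ρ < 1 := by
    have hlog : t * (1 - t) < log (1 + t) := by
      refine lt_of_lt_of_le ?_ (one_sub_inv_le_log_of_pos (by linarith))
      rw [lt_sub_iff_add_lt, inv_eq_one_div, ← sub_pos]
      field_simp
      nlinarith [pow_pos ht 3]
    rw [← lt_div_iff₀ (by positivity), one_div_one_div, ← exp_log (by linarith : 0 < 1 + t)]
    exact exp_lt_exp.2 hlog
  refine tendsto_of_tendsto_of_tendsto_of_le_of_le' tendsto_const_nhds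
    (tendsto_pow_atTop_nhds_zero_of_lt_one (by positivity) hρ)
    (Eventually.of_forall fun k => measureReal_nonneg) ?_
  filter_upwards [eventually_ge_atTop 1] with k hk
  refine ENNReal.toReal_le_of_le_ofReal (by positivity)
    ((gammaMeasure_Iic_le (by positivity) one_pos ht.le _).trans_eq ?_)
  rw [mul_pow, ← exp_nat_mul, rpow_natCast]
  ring_nf

lemma measureReal_expMeasure_Iic_le {r x : ℝ} (hr : 0 < r) (hx : 0 ≤ x) :
    (expMeasure r).real (Iic x) ≤ r * x := by
  have := isProbabilityMeasure_expMeasure hr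
  rw [← cdf_eq_real, cdf_expMeasure_eq hr, if_pos hx]
  linarith [add_one_le_exp (-(r * x))]

end ProbabilityTheory

namespace MeasureTheory

variable {Ω β : Type*} {mΩ : MeasurableSpace Ω} {mβ : MeasurableSpace β} {μ : Measure Ω}

lemma measureReal_preimage_of_map_eq {ν : Measure β} {f : Ω → β} (hf : μ.map f = ν)
    (hν : ν ≠ 0) {s : Set β} (hs : MeasurableSet s) : μ.real (f ⁻¹' s) = ν.real s := by
  subst hf
  rw [measureReal_def, measureReal_def,
    Measure.map_apply_of_aemeasurable (AEMeasurable.of_map_ne_zero hν) hs]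

lemma one_sub_lt_measureReal_of_compl_subset [IsProbabilityMeasure μ] {A B : Set Ω} {ε : ℝ}
    (hAB : Aᶜ ⊆ B) (hB : μ.real B < ε) : 1 - ε < μ.real A := by
  have : 1 ≤ μ.real A + μ.real B :=
    calc 1 = μ.real (A ∪ Aᶜ) := by simp
      _ ≤ μ.real A + μ.real Aᶜ := measureReal_union_le _ _
      _ ≤ μ.real A + μ.real B := add_le_add_right (measureReal_mono (μ := μ) hAB) _
  linarith

lemma measureReal_iUnion_union_le {ι : Type*} [Fintype ι] {A B : ι → Set Ω} {a b : ℝ}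
    (hA : ∀ i, μ.real (A i) ≤ a) (hB : ∀ i, μ.real (B i) ≤ b) :
    μ.real (⋃ i, A i ∪ B i) ≤ Fintype.card ι * (a + b) :=
  calc μ.real (⋃ i, A i ∪ B i) ≤ ∑ i, μ.real (A i ∪ B i) :=
        measureReal_iUnion_fintype_le _
    _ ≤ ∑ _i : ι, (a + b) :=
        Finset.sum_le_sum fun i _ => (measureReal_union_le _ _).trans (add_le_add (hA i) (hB i))
    _ = Fintype.card ι * (a + b) := by simp [mul_add]

end MeasureTheory

lemma one_lt_prod_of_forall_one_lt {M : ℕ} (hM : 1 ≤ M) {f : Fin M → ℝ}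
    (hf : ∀ m, 1 < f m) : 1 < ∏ m, f m :=
  calc (1 : ℝ) = ∏ _m : Fin M, 1 := Finset.prod_const_one.symm
    _ < ∏ m, f m := Finset.prod_lt_prod_of_nonempty (fun _ _ => one_pos) (fun m _ => hf m)
        ⟨⟨0, hM⟩, Finset.mem_univ _⟩

noncomputable section

namespace FadingCovertness

def blockDensity (k : ℕ) (z v : ℝ) : ℝ := (v ^ k)⁻¹ * exp (-z / v)

def blockIntegral (k : ℕ) (ζ z a : ℝ) : ℝ :=
  ∫ v in Ioi a, blockDensity k z v * exp (-v / ζ)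

def likelihoodRatio (σw2 ζ : ℝ) (k : ℕ) (σa2 z : ℝ) : ℝ :=
  exp (σa2 / ζ) * blockIntegral k ζ z (σw2 + σa2) / blockIntegral k ζ z σw2

section Density

variable {k : ℕ} {z : ℝ}

lemma blockDensity_pos {v : ℝ} (hv : 0 < v) : 0 < blockDensity k z v := by
  unfold blockDensity; positivity

lemma blockDensity_eq_exp {v : ℝ} (hv : 0 < v) :
    blockDensity k z v = exp (-(k * log v + z / v)) := by
  rw [blockDensity, ← exp_log (pow_pos hv k), ← exp_neg, ← exp_add, log_pow]
  ring_nf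

lemma exp_mul_blockDensity_le {p q c : ℝ} (hp : 0 < p) (hpq : p ≤ q) (hz : k * c ≤ z) :
    exp (k * ((q - p) * (c - q) / (p * q))) * blockDensity k z p ≤ blockDensity k z q := by
  have hq : 0 < q := hp.trans_le hpq
  rw [blockDensity_eq_exp hp, blockDensity_eq_exp hq, ← exp_add, exp_le_exp]
  have hlog : log q - log p ≤ (q - p) / p := by
    rw [← log_div hq.ne' hp.ne', sub_div, div_self hp.ne']
    exact log_le_sub_one_of_pos (div_pos hq hp)
  have hk : (0 : ℝ) ≤ k := k.cast_nonneg
  have key : k * (log q - log p) + k * ((q - p) * (c - q) / (p * q)) ≤ z / p - z / q := by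
    calc k * (log q - log p) + k * ((q - p) * (c - q) / (p * q))
        ≤ k * ((q - p) / p) + k * ((q - p) * (c - q) / (p * q)) := by gcongr
      _ = k * c * ((q - p) / (p * q)) := by field_simp; ring
      _ ≤ z * ((q - p) / (p * q)) := by gcongr
      _ = z / p - z / q := by field_simp
  linarith

lemma blockDensity_le_of_le {p q : ℝ} (hp : 0 < p) (hpq : p ≤ q) (hz : k * q ≤ z) :
    blockDensity k z p ≤ blockDensity k z q := by
  simpa using exp_mul_blockDensity_le hp hpq hz

end Density

section Integral

variable {k : ℕ} {ζ z : ℝ}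

lemma integrableOn_blockDensity_mul_exp {a : ℝ} (ha : 0 < a) (hζ : 0 < ζ) :
    IntegrableOn (fun v => blockDensity k z v * exp (-v / ζ)) (Ioi a) := by
  have hexp : IntegrableOn (fun v => exp (-ζ⁻¹ * v)) (Ioi a) :=
    exp_neg_integrableOn_Ioi a (inv_pos.2 hζ)
  simp_rw [neg_div, div_eq_inv_mul, ← neg_mul]
  refine hexp.bdd_mul (c := (a ^ k)⁻¹ * exp (|z| / a)) (by unfold blockDensity; fun_prop) ?_
  filter_upwards [ae_restrict_mem measurableSet_Ioi] with v (hv : a < v)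
  have hv0 : 0 < v := ha.trans hv
  rw [norm_of_nonneg (blockDensity_pos hv0).le, blockDensity]
  refine mul_le_mul (by gcongr) (exp_le_exp.2 ?_) (by positivity) (by positivity)
  calc -z / v ≤ |z| / v := by gcongr; exact neg_le_abs z
    _ ≤ |z| / a := by gcongr

lemma blockIntegral_nonneg {a : ℝ} (ha : 0 ≤ a) : 0 ≤ blockIntegral k ζ z a :=
  setIntegral_nonneg measurableSet_Ioi fun v (hv : a < v) =>
    mul_nonneg (blockDensity_pos (ha.trans_lt hv)).le (exp_pos _).le

lemma blockIntegral_anti {a b : ℝ} (ha : 0 < a) (hab : a ≤ b) (hζ : 0 < ζ) :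
    blockIntegral k ζ z b ≤ blockIntegral k ζ z a := by
  refine setIntegral_mono_set (integrableOn_blockDensity_mul_exp ha hζ) ?_
    (Ioi_subset_Ioi hab).eventuallyLE
  filter_upwards [ae_restrict_mem measurableSet_Ioi] with v (hv : a < v)
  exact mul_nonneg (blockDensity_pos (ha.trans hv)).le (exp_pos _).le

lemma blockIntegral_eq_add {a b : ℝ} (ha : 0 < a) (hab : a ≤ b) (hζ : 0 < ζ) :
    blockIntegral k ζ z a =
      (∫ v in Ioc a b, blockDensity k z v * exp (-v / ζ)) + blockIntegral k ζ z b := by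
  have hI := integrableOn_blockDensity_mul_exp (k := k) (z := z) ha hζ
  rw [blockIntegral, blockIntegral, ← setIntegral_union (Ioc_disjoint_Ioi le_rfl)
    measurableSet_Ioi (hI.mono_set Ioc_subset_Ioi_self) (hI.mono_set (Ioi_subset_Ioi hab)),
    Ioc_union_Ioi_eq_Ioi hab]

lemma setIntegral_Ioc_blockDensity_le {a b : ℝ} (ha : 0 < a) (hab : a ≤ b) (hζ : 0 < ζ)
    (hz : k * b ≤ z) :
    ∫ v in Ioc a b, blockDensity k z v * exp (-v / ζ) ≤
      (b - a) * (blockDensity k z b * exp (-a / ζ)) := by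
  have hbound : ∀ v ∈ Ioc a b,
      blockDensity k z v * exp (-v / ζ) ≤ blockDensity k z b * exp (-a / ζ) := fun v hv =>
    mul_le_mul (blockDensity_le_of_le (ha.trans hv.1) hv.2 hz)
      (exp_le_exp.2 (by gcongr; exact hv.1.le)) (exp_pos _).le
      (blockDensity_pos (ha.trans_le hab)).le
  calc ∫ v in Ioc a b, blockDensity k z v * exp (-v / ζ)
      ≤ ∫ _ in Ioc a b, blockDensity k z b * exp (-a / ζ) :=
        setIntegral_mono_on
          ((integrableOn_blockDensity_mul_exp ha hζ).mono_set Ioc_subset_Ioi_self)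
          (integrableOn_const measure_Ioc_lt_top.ne) measurableSet_Ioc hbound
    _ = (b - a) * (blockDensity k z b * exp (-a / ζ)) := by
        rw [setIntegral_const, measureReal_def, volume_Ioc, ENNReal.toReal_ofReal (by linarith),
          smul_eq_mul]

lemma le_blockIntegral {b q c : ℝ} (hb : 0 < b) (hbq : b ≤ q) (hqc : q ≤ c) (hζ : 0 < ζ)
    (hz : k * c ≤ z) :
    (c - q) * (blockDensity k z q * exp (-c / ζ)) ≤ blockIntegral k ζ z b := by
  have hq : 0 < q := hb.trans_le hbq
  have hbound : ∀ v ∈ Ioc q c,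
      blockDensity k z q * exp (-c / ζ) ≤ blockDensity k z v * exp (-v / ζ) := fun v hv =>
    mul_le_mul (blockDensity_le_of_le hq hv.1.le
        ((mul_le_mul_of_nonneg_left hv.2 k.cast_nonneg).trans hz))
      (exp_le_exp.2 (by gcongr; exact hv.2)) (exp_pos _).le (blockDensity_pos (hq.trans hv.1)).le
  calc (c - q) * (blockDensity k z q * exp (-c / ζ))
      ≤ ∫ v in Ioc q c, blockDensity k z v * exp (-v / ζ) := by
        simpa [Real.volume_Ioc, hqc, mul_comm] using
          setIntegral_ge_of_const_le_real measurableSet_Ioc measure_Ioc_lt_top.ne hbound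
            ((integrableOn_blockDensity_mul_exp hq hζ).mono_set Ioc_subset_Ioi_self)
    _ ≤ blockIntegral k ζ z q := by
        rw [blockIntegral_eq_add hq hqc hζ]
        exact le_add_of_nonneg_right (blockIntegral_nonneg (hq.le.trans hqc))
    _ ≤ blockIntegral k ζ z b := blockIntegral_anti hb hbq hζ

end Integral

lemma eventually_blockIntegral_lt {ζ a b c T : ℝ} (ha : 0 < a) (hab : a < b) (hbc : b < c)
    (hζ : 0 < ζ) (hT : 1 < T) :
    ∀ᶠ k : ℕ in atTop, ∀ z, k * c ≤ z →
      0 < blockIntegral k ζ z b ∧ blockIntegral k ζ z a < T * blockIntegral k ζ z b := by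
  obtain ⟨q, hbq, hqc⟩ := exists_between hbc
  have hb : 0 < b := ha.trans hab
  have hα : 0 < (q - b) * (c - q) / (b * q) :=
    div_pos (mul_pos (sub_pos.2 hbq) (sub_pos.2 hqc)) (mul_pos hb (hb.trans hbq))
  set A := (b - a) * exp (-a / ζ)
  set B := (T - 1) * ((c - q) * exp (-c / ζ))
  have hB : 0 < B := mul_pos (sub_pos.2 hT) (mul_pos (sub_pos.2 hqc) (exp_pos _))
  have hgrowth : Tendsto (fun k : ℕ => exp (k * ((q - b) * (c - q) / (b * q)))) atTop atTop :=
    tendsto_exp_atTop.comp (tendsto_natCast_atTop_atTop.atTop_mul_const hα)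
  filter_upwards [hgrowth.eventually_gt_atTop (A / B)] with k hk z hz
  rw [div_lt_iff₀ hB] at hk
  have hzb : k * b ≤ z := (mul_le_mul_of_nonneg_left hbc.le k.cast_nonneg).trans hz
  have hlow := le_blockIntegral (ζ := ζ) hb hbq.le hqc.le hζ hz
  have hsmall : (b - a) * (blockDensity k z b * exp (-a / ζ)) <
      (T - 1) * ((c - q) * (blockDensity k z q * exp (-c / ζ))) :=
    calc (b - a) * (blockDensity k z b * exp (-a / ζ)) = A * blockDensity k z b := by ring
      _ < exp (k * ((q - b) * (c - q) / (b * q))) * B * blockDensity k z b :=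
          mul_lt_mul_of_pos_right hk (blockDensity_pos hb)
      _ = B * (exp (k * ((q - b) * (c - q) / (b * q))) * blockDensity k z b) := by ring
      _ ≤ B * blockDensity k z q :=
          mul_le_mul_of_nonneg_left (exp_mul_blockDensity_le hb hbq.le hz) hB.le
      _ = (T - 1) * ((c - q) * (blockDensity k z q * exp (-c / ζ))) := by ring
  have hlowpos : 0 < (c - q) * (blockDensity k z q * exp (-c / ζ)) :=
    mul_pos (sub_pos.2 hqc) (mul_pos (blockDensity_pos (hb.trans hbq)) (exp_pos _))
  refine ⟨hlowpos.trans_le hlow, ?_⟩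
  rw [blockIntegral_eq_add ha hab.le hζ]
  linarith [setIntegral_Ioc_blockDensity_le (ζ := ζ) ha hab.le hζ hzb,
    mul_le_mul_of_nonneg_left hlow (sub_pos.2 hT).le]

section LikelihoodRatio

variable {σw2 ζ s : ℝ} {k : ℕ}

lemma likelihoodRatio_nonneg (hσw2 : 0 < σw2) (hs : 0 ≤ s) (z : ℝ) :
    0 ≤ likelihoodRatio σw2 ζ k s z :=
  div_nonneg (mul_nonneg (exp_pos _).le (blockIntegral_nonneg (by linarith)))
    (blockIntegral_nonneg hσw2.le)

lemma likelihoodRatio_le_exp (hσw2 : 0 < σw2) (hs : 0 ≤ s) (hζ : 0 < ζ) (z : ℝ) :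
    likelihoodRatio σw2 ζ k s z ≤ exp (s / ζ) := by
  rw [likelihoodRatio, mul_div_assoc]
  exact mul_le_of_le_one_right (exp_pos _).le <| div_le_one_of_le₀
    (blockIntegral_anti hσw2 (le_add_of_nonneg_right hs) hζ) (blockIntegral_nonneg hσw2.le)

lemma eventually_one_lt_likelihoodRatio (hσw2 : 0 < σw2) (hζ : 0 < ζ) (hs : 0 < s) {c : ℝ}
    (hc : σw2 + s < c) :
    ∀ᶠ k : ℕ in atTop, ∀ z, k * c ≤ z → 1 < likelihoodRatio σw2 ζ k s z := by
  filter_upwards [eventually_blockIntegral_lt hσw2 (lt_add_of_pos_right σw2 hs) hc hζ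
    (one_lt_exp_iff.2 (div_pos hs hζ))] with k hk z hz
  obtain ⟨hpos, hlt⟩ := hk z hz
  have hanti := blockIntegral_anti (k := k) (z := z) hσw2 (le_add_of_nonneg_right hs.le) hζ
  rw [likelihoodRatio, one_lt_div (hpos.trans_le hanti)]
  exact hlt

lemma prod_likelihoodRatio_le {M : ℕ} (hM : 1 ≤ M) (hσw2 : 0 < σw2) (hζ : 0 < ζ) {γ : ℝ}
    (hγ : 1 < γ) (z : Fin M → ℝ) :
    ∏ m, likelihoodRatio σw2 ζ k (ζ * log γ / M) (z m) ≤ γ := by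
  have hM0 : (0 : ℝ) < M := by exact_mod_cast hM
  have hs : 0 ≤ ζ * log γ / M := by have := log_pos hγ; positivity
  calc _ ≤ ∏ _m : Fin M, exp (ζ * log γ / M / ζ) := Finset.prod_le_prod
        (fun m _ => likelihoodRatio_nonneg hσw2 hs _)
        (fun m _ => likelihoodRatio_le_exp hσw2 hs hζ _)
    _ = γ := by
      rw [Finset.prod_const, Finset.card_fin, ← exp_nat_mul]
      convert exp_log (by linarith : 0 < γ) using 2
      field_simp

end LikelihoodRatio

lemma exists_eventually_measureReal_prod_likelihoodRatio_le_one_lt {Ω : Type*}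
    {mΩ : MeasurableSpace Ω} {μ : Measure Ω} [IsProbabilityMeasure μ] {M : ℕ} (hM : 1 ≤ M)
    {σw2 ζ δ : ℝ} (hσw2 : 0 < σw2) (hζ : 0 < ζ) (hδ : 0 < δ)
    {E : Fin M → Ω → ℝ} {G : ℕ → Fin M → Ω → ℝ}
    (hE : ∀ m, μ.map (E m) = expMeasure ζ⁻¹)
    (hG : ∀ k : ℕ, 1 ≤ k → ∀ m, μ.map (G k m) = gammaMeasure k 1) :
    ∃ s, 0 < s ∧ ∀ᶠ k : ℕ in atTop, μ.real
      {ω | ∏ m, likelihoodRatio σw2 ζ k s ((σw2 + E m ω) * G k m ω) ≤ 1} < δ := by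
  have hM0 : (0 : ℝ) < M := by exact_mod_cast hM
  set s := ζ * δ / (8 * M) with hs_def
  have hs : 0 < s := by positivity
  set c := σw2 + 3 * s / 2 with hc_def
  set θ := c / (σw2 + 2 * s) with hθ_def
  have hθc : (σw2 + 2 * s) * θ = c := by rw [hθ_def]; field_simp
  have hθ : θ < 1 := (div_lt_one (by positivity)).2 (by linarith)
  have hE_small (m : Fin M) : μ.real {ω | E m ω ≤ 2 * s} ≤ δ / (4 * M) :=
    calc μ.real (E m ⁻¹' Iic (2 * s)) = (expMeasure ζ⁻¹).real (Iic (2 * s)) :=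
          measureReal_preimage_of_map_eq (hE m)
            (isProbabilityMeasure_expMeasure (inv_pos.2 hζ)).ne_zero measurableSet_Iic
      _ ≤ ζ⁻¹ * (2 * s) := measureReal_expMeasure_Iic_le (inv_pos.2 hζ) (by positivity)
      _ = δ / (4 * M) := by rw [hs_def]; field_simp; ring
  refine ⟨s, hs, ?_⟩
  filter_upwards [eventually_one_lt_likelihoodRatio hσw2 hζ hs (c := c) (by linarith),
    (tendsto_measureReal_gammaMeasure_Iic_mul hθ).eventually
      (gt_mem_nhds (show (0 : ℝ) < δ / (4 * M) by positivity)),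
    eventually_ge_atTop 1] with k hLR hG_small hk
  have hG_small' (m : Fin M) : μ.real {ω | G k m ω ≤ θ * k} < δ / (4 * M) := by
    have := isProbabilityMeasure_gammaMeasure (a := k) (r := 1) (by positivity) one_pos
    rwa [← measureReal_preimage_of_map_eq (hG k hk m) (IsProbabilityMeasure.ne_zero _)
      measurableSet_Iic] at hG_small
  have hsub : {ω | ∏ m, likelihoodRatio σw2 ζ k s ((σw2 + E m ω) * G k m ω) ≤ 1} ⊆
      ⋃ m, {ω | E m ω ≤ 2 * s} ∪ {ω | G k m ω ≤ θ * k} := by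
    intro ω hω
    by_contra hgood
    simp only [mem_iUnion, mem_union, mem_ofPred_eq, not_exists, not_or, not_le] at hgood
    have hz (m : Fin M) : k * c ≤ (σw2 + E m ω) * G k m ω :=
      calc k * c = (σw2 + 2 * s) * (θ * k) := by rw [← hθc]; ring
        _ ≤ (σw2 + E m ω) * G k m ω :=
          mul_le_mul (by linarith [(hgood m).1]) (hgood m).2.le (by positivity)
            (by linarith [(hgood m).1])
    exact (show _ ≤ (1 : ℝ) from hω).not_gt
      (one_lt_prod_of_forall_one_lt hM fun m => hLR _ (hz m))
  calc _ ≤ μ.real (⋃ m, {ω | E m ω ≤ 2 * s} ∪ {ω | G k m ω ≤ θ * k}) :=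
        measureReal_mono hsub
    _ ≤ M * (δ / (4 * M) + δ / (4 * M)) := by
        simpa using measureReal_iUnion_union_le hE_small fun m => (hG_small' m).le
    _ < δ := by field_simp; linarith

end FadingCovertness

end

open FadingCovertness in
theorem multi_block_fading_covertness_core_general
    (M : ℕ) (hM : 1 ≤ M)
    (σw2 ζ γ ε : ℝ) (hσw2 : 0 < σw2) (hζ : 0 < ζ)
    (hε : ε ∈ Set.Ioo (0:ℝ) 1)
    (Λ : ℕ → ℝ → ℝ → ℝ)
    (hΛ : ∀ (k : ℕ) (σa2 z : ℝ), Λ k σa2 z = Real.exp (σa2 / ζ) *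
      (∫ v in Set.Ioi (σw2 + σa2),
        (v ^ k)⁻¹ * Real.exp (-z / v) * Real.exp (-v / ζ)) /
      (∫ v in Set.Ioi σw2,
        (v ^ k)⁻¹ * Real.exp (-z / v) * Real.exp (-v / ζ)))
    (Ω : Type*) [MeasureSpace Ω] [IsProbabilityMeasure (ℙ : Measure Ω)]
    (E : Fin M → Ω → ℝ) (G : ℕ → Fin M → Ω → ℝ)
    (hE_law : ∀ m, Measure.map (E m) ℙ = expMeasure ζ⁻¹)
    (hG_law : ∀ k : ℕ, 1 ≤ k → ∀ m, Measure.map (G k m) ℙ = gammaMeasure k 1) :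
    ∃ σa2 : ℝ, 0 < σa2 ∧ ∃ K : ℕ, 1 ≤ K ∧ ∀ k : ℕ, K ≤ k →
      (ℙ {ω : Ω | γ <
          ∏ m, Λ k σa2 ((σw2 + E m ω) * G k m ω)}).toReal +
      (ℙ {ω : Ω |
          ∏ m, Λ k σa2 ((σw2 + E m ω + σa2) * G k m ω) ≤ γ}).toReal
        > 1 - ε := by
  obtain rfl : Λ = likelihoodRatio σw2 ζ := by funext k s z; exact hΛ k s z
  rcases le_or_gt γ 1 with hγ | hγ
  · obtain ⟨s, hs, hFA⟩ := exists_eventually_measureReal_prod_likelihoodRatio_le_one_lt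
      (μ := ℙ) hM hσw2 hζ hε.1 hE_law hG_law
    obtain ⟨K, hK⟩ := eventually_atTop.1 hFA
    refine ⟨s, hs, max K 1, le_max_right K 1, fun k hk => ?_⟩
    refine lt_of_lt_of_le (one_sub_lt_measureReal_of_compl_subset (fun ω hω => ?_)
      (hK k (le_of_max_le_left hk))) (le_add_of_nonneg_right ENNReal.toReal_nonneg)
    exact (not_lt.1 (show ¬ γ < _ from hω)).trans hγ
  · refine ⟨ζ * log γ / M, div_pos (mul_pos hζ (log_pos hγ)) (by exact_mod_cast hM),
      1, le_rfl, fun k _ => ?_⟩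
    simp only [prod_likelihoodRatio_le hM hσw2 hζ hγ, ofPred_true, measure_univ,
      ENNReal.toReal_one]
    exact lt_of_lt_of_le (by linarith [hε.1]) (le_add_of_nonneg_left ENNReal.toReal_nonneg)

/-- Analytical core of Theorem 3 (M-block Rayleigh fading on the
jammer-to-Willie channel, k symbols per block): there is a transmit power
`σ_a² > 0` not depending on `k` such that, against Willie's optimal likelihood
ratio test with threshold `γ`, the sum of the false-alarm and missed-detection
probabilities exceeds `1 - ε` for all `k` large. -/
theorem multi_block_fading_covertness_core
    (M : ℕ) (hM : 1 ≤ M)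
    (σw2 ζ γ ε : ℝ) (hσw2 : 0 < σw2) (hζ : 0 < ζ) (hγ : 0 < γ)
    (hε : ε ∈ Set.Ioo (0:ℝ) 1)
    (Λ : ℕ → ℝ → ℝ → ℝ)
    (hΛ : ∀ (k : ℕ) (σa2 z : ℝ), Λ k σa2 z = Real.exp (σa2 / ζ) *
      (∫ v in Set.Ioi (σw2 + σa2),
        (v ^ k)⁻¹ * Real.exp (-z / v) * Real.exp (-v / ζ)) /
      (∫ v in Set.Ioi σw2,
        (v ^ k)⁻¹ * Real.exp (-z / v) * Real.exp (-v / ζ)))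
    (Ω : Type*) [MeasureSpace Ω] [IsProbabilityMeasure (ℙ : Measure Ω)]
    (E : Fin M → Ω → ℝ) (G : ℕ → Fin M → Ω → ℝ)
    (hE_meas : ∀ m, Measurable (E m))
    (hG_meas : ∀ k m, Measurable (G k m))
    (hE_law : ∀ m, Measure.map (E m) ℙ = expMeasure ζ⁻¹)
    (hG_law : ∀ k : ℕ, 1 ≤ k → ∀ m, Measure.map (G k m) ℙ = gammaMeasure k 1)
    (hindep : ∀ k : ℕ,
      iIndepFun (m := fun _ : Fin M ⊕ Fin M => (inferInstance : MeasurableSpace ℝ))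
        (Sum.elim E (G k)) ℙ) :
    ∃ σa2 : ℝ, 0 < σa2 ∧ ∃ K : ℕ, 1 ≤ K ∧ ∀ k : ℕ, K ≤ k →
      (ℙ {ω : Ω | γ <
          ∏ m, Λ k σa2 ((σw2 + E m ω) * G k m ω)}).toReal +
      (ℙ {ω : Ω |
          ∏ m, Λ k σa2 ((σw2 + E m ω + σa2) * G k m ω) ≤ γ}).toReal
        > 1 - ε :=
  multi_block_fading_covertness_core_general M hM σw2 ζ γ ε hσw2 hζ hε Λ hΛ Ω E G hE_law hG_law
end
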